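/- The strong rank condition is Morita invariant: if R and S are Morita equivalent rings and R satisfies the strong rank condition, then S satisfies the strong rank condition. -/

import Mathlib

universe u v

open CategoryTheory

/-- A ring `R` satisfies the (right) strong rank condition if for all positive integers
`m < n` there is no injective homomorphism of right `R`-modules `R^n → R^m`.
Right `R`-modules are treated as left modules over the opposite ring `Rᵐᵒᵖ`. -/
def RightStrongRankCondition (R : Type*) [Ring R] : Prop :=
  ∀ m n : ℕ, 0 < m → m < n →
    ¬ ∃ f : (Fin n → Rᵐᵒᵖ) →ₗ[Rᵐᵒᵖ] (Fin m → Rᵐᵒᵖ), Function.Injective f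

/-!
Let `Q` be the image of `R` under the equivalence and `P` the preimage of `S`. The trace ideal
of a separator `G` of a module category is the whole ring, so the ring is a direct summand of a
finite power of `G`: this gives `S ↪ Q^l`, and `R ↪ P^k`, which the equivalence turns into
`Q ↪ S^k`. If `S` failed the strong rank condition, `S^(ℕ)` would embed into some `S^n`, and
then `Q^N ↪ (S^k)^N ↪ S^(ℕ) ↪ S^n ↪ (Q^l)^n` for every `N`. The equivalence preserves finite
direct sums and monomorphisms, so `R^N ↪ R^(nl)`, impossible for `N = nl + 1`.
-/

open Function

theorem rightStrongRankCondition_iff (R : Type*) [Ring R] :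
    RightStrongRankCondition R ↔ StrongRankCondition Rᵐᵒᵖ := by
  refine ⟨fun h => (strongRankCondition_iff_succ _).2 fun n f hf => ?_,
    fun h m n _ hmn ⟨f, hf⟩ => (le_of_fin_injective _ f hf).not_gt hmn⟩
  cases n with
  | zero =>
    -- `R^1 ↪ R^0` forces `R = 0`, and then `0 : R^2 → R^1` is injective
    have := hf.subsingleton
    have : Subsingleton Rᵐᵒᵖ := (const_injective (α := Fin 1)).subsingleton
    exact h 1 2 one_pos one_lt_two ⟨0, injective_of_subsingleton _⟩
  | succ n => exact h (n + 1) (n + 2) n.succ_pos (Nat.lt_succ_self _) ⟨f, hf⟩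

lemma exists_injective_finsupp_nat (A : Type*) [Ring A] (M : Type*) [AddCommGroup M]
    [Module A M] (α : Type*) [Finite α] : ∃ g : (α → M) →ₗ[A] (ℕ →₀ M), Injective g := by
  obtain ⟨j, hj⟩ := Countable.exists_injective_nat α
  exact ⟨Finsupp.lmapDomain M A j ∘ₗ (Finsupp.linearEquivFunOnFinite A M α).symm.toLinearMap,
    (Finsupp.mapDomain_injective hj).comp (LinearEquiv.injective _)⟩

lemma ModuleCat.isSeparator_self (A : Type u) [Ring A] : IsSeparator (ModuleCat.of A A) :=
  (Preadditive.isSeparator_iff _).2 fun X Y f hf => by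
    ext x
    simpa using LinearMap.congr_fun
      (congrArg ModuleCat.Hom.hom (hf (ModuleCat.ofHom (LinearMap.toSpanSingleton A X x)))) 1

section Separator

variable {A : Type u} [Ring A] {Q : ModuleCat.{u} A}

lemma iSup_range_eq_top_of_isSeparator (hQ : IsSeparator Q) :
    ⨆ f : Q →ₗ[A] A, LinearMap.range f = ⊤ := by
  set T := ⨆ f : Q →ₗ[A] A, LinearMap.range f
  have hmkQ : ModuleCat.ofHom T.mkQ = 0 :=
    (Preadditive.isSeparator_iff Q).1 hQ (X := ModuleCat.of A A) _ fun h => by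
      ext x
      simpa using le_iSup (fun f : Q →ₗ[A] A => LinearMap.range f) h.hom
        (LinearMap.mem_range_self h.hom x)
  rw [← Submodule.ker_mkQ T, show T.mkQ = 0 from congrArg ModuleCat.Hom.hom hmkQ,
    LinearMap.ker_zero]

lemma exists_injective_fin_pi_of_isSeparator (hQ : IsSeparator Q) :
    ∃ (k : ℕ) (s : A →ₗ[A] (Fin k → Q)), Injective s := by
  have h1 : (1 : A) ∈ ⨆ f : Q →ₗ[A] A, LinearMap.range f := by
    rw [iSup_range_eq_top_of_isSeparator hQ]; trivial
  rw [Submodule.iSup_eq_span, Submodule.mem_span_set'] at h1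
  obtain ⟨k, c, x, hx⟩ := h1
  choose f hf using fun i => Set.mem_iUnion.1 (x i).2
  choose q hq using hf
  -- a left inverse, because `∑ i, c i • f i (q i) = 1`
  refine ⟨k, LinearMap.pi fun i => LinearMap.toSpanSingleton A Q (c i • q i),
    LeftInverse.injective (g := fun v => ∑ i, f i (v i)) fun b => ?_⟩
  simpa [hq, Finset.mul_sum] using congrArg (b * ·) hx

end Separator

namespace CategoryTheory.Functor

open Limits

variable {A : Type u} {B : Type v} [Ring A] [Ring B] (F : ModuleCat.{u} A ⥤ ModuleCat.{v} B)
  [F.Additive]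

noncomputable def mapPiIso {X : ModuleCat A} {X' : ModuleCat B} (i : F.obj X ≅ X') (J : Type)
    [Finite J] : F.obj (ModuleCat.of A (J → X)) ≅ ModuleCat.of B (J → X') :=
  F.mapIso (ModuleCat.biproductIsoPi fun _ : J => X).symm ≪≫ F.mapBiproduct _ ≪≫
    biproduct.mapIso (fun _ => i) ≪≫ ModuleCat.biproductIsoPi _

lemma exists_injective_pi_of_injective [F.PreservesMonomorphisms] {M N : ModuleCat A}
    {M' N' : ModuleCat B} (iM : F.obj M ≅ M') (iN : F.obj N ≅ N') {ι κ : Type} [Finite ι]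
    [Finite κ] {g : (ι → M) →ₗ[A] (κ → N)} (hg : Function.Injective g) :
    ∃ g' : (ι → M') →ₗ[B] (κ → N'), Function.Injective g' := by
  have : Mono (ModuleCat.ofHom g) := (ModuleCat.mono_iff_injective _).2 hg
  exact ⟨_, (ModuleCat.mono_iff_injective
    ((F.mapPiIso iM ι).inv ≫ F.map (ModuleCat.ofHom g) ≫ (F.mapPiIso iN κ).hom)).1 inferInstance⟩

end CategoryTheory.Functor

theorem StrongRankCondition.of_equivalence {A : Type u} {B : Type v} [Ring A] [Ring B]
    (e : ModuleCat.{u} A ≌ ModuleCat.{v} B) [e.functor.Additive] [StrongRankCondition A] :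
    StrongRankCondition B := by
  have : e.inverse.Additive := e.inverse_additive
  set Q := e.functor.obj (ModuleCat.of A A)
  obtain ⟨l, σ, hσ⟩ := exists_injective_fin_pi_of_isSeparator
    ((ModuleCat.isSeparator_self A).of_equivalence e)
  obtain ⟨k, τ, hτ⟩ : ∃ (k : ℕ) (τ : Q →ₗ[B] (Fin k → B)), Injective τ := by
    obtain ⟨k, s, hs⟩ := exists_injective_fin_pi_of_isSeparator
      ((ModuleCat.isSeparator_self B).of_equivalence e.symm)
    have hs' : Injective (s ∘ₗ (LinearEquiv.funUnique Unit A A).toLinearMap) :=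
      hs.comp (LinearEquiv.injective _)
    obtain ⟨τ, hτ⟩ := e.functor.exists_injective_pi_of_injective (Iso.refl Q)
      (e.counitIso.app (ModuleCat.of B B)) hs'
    exact ⟨k, τ ∘ₗ (LinearEquiv.funUnique Unit B Q).symm.toLinearMap,
      hτ.comp (LinearEquiv.injective _)⟩
  rw [strongRankCondition_iff_forall_not_injective]
  intro n g hg
  obtain ⟨j, hj⟩ := exists_injective_finsupp_nat B B (Fin (n * l + 1) × Fin k)
  let uncurryQ := (LinearEquiv.curry B Q (Fin n) (Fin l)).symm
  let uncurryB := (LinearEquiv.curry B B (Fin (n * l + 1)) (Fin k)).symm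
  have hQ : Injective (uncurryQ.toLinearMap ∘ₗ σ.compLeft (Fin n) ∘ₗ g ∘ₗ j ∘ₗ
      uncurryB.toLinearMap ∘ₗ τ.compLeft (Fin (n * l + 1))) :=
    uncurryQ.injective.comp <| hσ.comp_left.comp <| hg.comp <| hj.comp <|
      uncurryB.injective.comp hτ.comp_left
  obtain ⟨h, hh⟩ := e.inverse.exists_injective_pi_of_injective
    (e.unitIso.app (ModuleCat.of A A)).symm (e.unitIso.app (ModuleCat.of A A)).symm hQ
  simpa using card_le_of_injective A h hh

/-- The strong rank condition is Morita invariant: if the categories of right modules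
over `R` and over `S` are equivalent via an additive functor and `R` satisfies the strong
rank condition, then `S` satisfies the strong rank condition. -/
theorem statement10 {R : Type u} {S : Type v} [Ring R] [Ring S]
    (e : ModuleCat.{u} Rᵐᵒᵖ ≌ ModuleCat.{v} Sᵐᵒᵖ) (he : e.functor.Additive)
    (hR : RightStrongRankCondition R) :
    RightStrongRankCondition S := by
  rw [rightStrongRankCondition_iff] at hR ⊢
  exact StrongRankCondition.of_equivalence e
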